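/- arXiv:2107.00321 — 4 statements merged into one kernel-verified Lean document; each statement's English description precedes it below -/
import Mathlib

section
/- Let P be a Poisson algebra over a field K with a set of algebra generators {x_i}. Then the ideal c_P of P generated by all Poisson structure constants c_{ij} = {x_i, x_j} is a Poisson ideal of P, i.e., {P, c_P} ⊆ c_P. -/
/-- A Poisson bracket on a commutative `K`-algebra `P`. -/
def IsPoissonBracket (K : Type*) {P : Type*} [Field K] [CommRing P] [Algebra K P]
    (b : P →ₗ[K] P →ₗ[K] P) : Prop :=
  (∀ a, b a a = 0) ∧
  (∀ a x y, b a (b x y) = b (b a x) y + b x (b a y)) ∧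
  (∀ a x y, b a (x * y) = b a x * y + x * b a y)

/-!
By the Jacobi identity, `{p, {xᵢ, xⱼ}} = {{p, xᵢ}, xⱼ} - {{p, xⱼ}, xᵢ}`, so it suffices that
`{q, xⱼ} ∈ c_P` for every `q`. The elements `q` with this property form a subalgebra (Leibniz rule
in the first slot), which contains every generator `xᵢ` and hence is all of `P`. By the Leibniz
rule in the second slot, an ideal whose generators are mapped into it by every `{p, -}` is a
Poisson ideal.
-/

namespace IsPoissonBracket

variable {K P : Type*} [Field K] [CommRing P] [Algebra K P] {b : P →ₗ[K] P →ₗ[K] P}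

theorem apply_swap (hb : IsPoissonBracket K b) (u v : P) : b u v = -b v u := by
  have h := hb.1 (u + v)
  simp only [map_add, LinearMap.add_apply, hb.1, zero_add, add_zero] at h
  linear_combination h

theorem apply_one (hb : IsPoissonBracket K b) (a : P) : b a 1 = 0 := by
  have h := hb.2.2 a 1 1
  simp only [mul_one, one_mul] at h
  exact right_eq_add.mp h

theorem algebraMap_apply (hb : IsPoissonBracket K b) (r : K) (v : P) :
    b (algebraMap K P r) v = 0 := by
  rw [Algebra.algebraMap_eq_smul_one, map_smul, LinearMap.smul_apply, hb.apply_swap,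
    hb.apply_one, neg_zero, smul_zero]

theorem mul_apply (hb : IsPoissonBracket K b) (u v w : P) :
    b (u * v) w = b u w * v + u * b v w := by
  rw [hb.apply_swap, hb.2.2, hb.apply_swap w u, hb.apply_swap w v]
  ring

theorem apply_mem_of_adjoin_eq_top (hb : IsPoissonBracket K b) {s : Set P}
    (hs : Algebra.adjoin K s = ⊤) {J : Ideal P} {z : P} (hz : ∀ a ∈ s, b a z ∈ J) (q : P) :
    b q z ∈ J := by
  have hq : q ∈ Algebra.adjoin K s := hs ▸ Algebra.mem_top
  induction hq using Algebra.adjoin_induction with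
  | mem a ha => exact hz a ha
  | algebraMap r => simp only [hb.algebraMap_apply, J.zero_mem]
  | add u v _ _ hu hv => simpa only [map_add, LinearMap.add_apply] using J.add_mem hu hv
  | mul u v _ _ hu hv =>
    rw [hb.mul_apply]
    exact J.add_mem (J.mul_mem_right v hu) (J.mul_mem_left u hv)

theorem apply_mem_span (hb : IsPoissonBracket K b) {S : Set P}
    (hS : ∀ p, ∀ s ∈ S, b p s ∈ Ideal.span S) (p : P) {y : P} (hy : y ∈ Ideal.span S) :
    b p y ∈ Ideal.span S := by
  induction hy using Submodule.span_induction with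
  | mem s hs => exact hS p s hs
  | zero => simp only [map_zero, Submodule.zero_mem]
  | add u v _ _ hu hv => simpa only [map_add] using Submodule.add_mem _ hu hv
  | smul r z hz ihz =>
    rw [smul_eq_mul, hb.2.2]
    exact Submodule.add_mem _ (Ideal.mul_mem_left _ _ hz) (Ideal.mul_mem_left _ _ ihz)

end IsPoissonBracket

/-- If `P` is generated as a `K`-algebra by elements `x i`, then the ideal generated by
all Poisson structure constants `{x i, x j}` is a Poisson ideal of `P`. -/
theorem structure_constants_ideal_is_poisson (K P ι : Type*) [Field K] [CommRing P]
    [Algebra K P] (b : P →ₗ[K] P →ₗ[K] P) (hb : IsPoissonBracket K b)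
    (x : ι → P) (hx : Algebra.adjoin K (Set.range x) = ⊤) :
    ∀ p y : P,
      y ∈ Ideal.span (Set.range fun ij : ι × ι => b (x ij.1) (x ij.2)) →
      b p y ∈ Ideal.span (Set.range fun ij : ι × ι => b (x ij.1) (x ij.2)) := by
  set J := Ideal.span (Set.range fun ij : ι × ι => b (x ij.1) (x ij.2))
  have bracket_generator_mem (j : ι) (q : P) : b q (x j) ∈ J := by
    refine hb.apply_mem_of_adjoin_eq_top hx ?_ q
    rintro _ ⟨i, rfl⟩
    exact Ideal.subset_span ⟨(i, j), rfl⟩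
  refine hb.apply_mem_span ?_
  rintro p _ ⟨⟨i, j⟩, rfl⟩
  have jacobi : b p (b (x i) (x j)) = b (b p (x i)) (x j) - b (b p (x j)) (x i) := by
    rw [hb.2.1, hb.apply_swap (x i), sub_eq_add_neg]
  rw [jacobi]
  exact J.sub_mem (bracket_generator_mem j _) (bracket_generator_mem i _)
end

section
/- Let P be a Poisson algebra and S a multiplicative subset of P. Then the ideal a = ass(S) = {a ∈ P | sa = 0 for some s ∈ S} is a Poisson ideal of P. -/
/-- `0 = s • D (s * a) = s ^ 2 • D a + (s * a) • D s`. -/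
theorem Derivation.sq_smul_eq_zero_of_mul_eq_zero {R A M : Type*} [CommSemiring R]
    [CommSemiring A] [Algebra R A] [AddCommMonoid M] [Module A M] [Module R M]
    (D : Derivation R A M) {s a : A} (h : s * a = 0) : s ^ 2 • D a = 0 := by
  calc s ^ 2 • D a = s • D (s * a) := by
        rw [D.leibniz, smul_add, smul_smul, smul_smul, ← sq, h, zero_smul, add_zero]
    _ = 0 := by rw [h, D.map_zero, smul_zero]

def IsPoissonBracket.hamiltonian {K P : Type*} [Field K] [CommRing P] [Algebra K P]
    {b : P →ₗ[K] P →ₗ[K] P} (hb : IsPoissonBracket K b) (p : P) : Derivation K P P :=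
  Derivation.mk' (b p) fun x y => by
    rw [hb.2.2, smul_eq_mul, smul_eq_mul, add_comm, mul_comm (b p x)]

/-- For a multiplicative subset `S` of a Poisson algebra `P`, the ideal
`ass(S) = {a | s a = 0 for some s ∈ S}` is a Poisson ideal of `P`. -/
theorem assassinator_is_poisson_ideal (K P : Type*) [Field K] [CommRing P] [Algebra K P]
    (b : P →ₗ[K] P →ₗ[K] P) (hb : IsPoissonBracket K b) (S : Submonoid P) :
    ∀ p a : P, (∃ s ∈ S, s * a = 0) → ∃ s ∈ S, s * b p a = 0 := by
  rintro p a ⟨s, hs, h⟩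
  exact ⟨s ^ 2, S.pow_mem hs 2, (hb.hamiltonian p).sq_smul_eq_zero_of_mul_eq_zero h⟩
end

section
/- Let P₂ = K[x,y] be the polynomial Poisson algebra in two variables with bracket determined by {y, x} = 1 (the symplectic plane). Then the Poisson enveloping algebra U(P₂), i.e., the K-algebra generated by x, y, δ_x, δ_y subject to xy = yx, [δ_x, δ_y] = 0, [δ_y, x] = 1, [δ_y, y] = 0, [δ_x, y] = −1, [δ_x, x] = 0, is isomorphic to the second Weyl algebra A₂ (the algebra of differential operators on K[x,y], equivalently A₁ ⊗ A₁). -/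
/-- Defining relations of the Poisson enveloping algebra `U(P₂)` of the symplectic
plane `P₂ = K[x,y]`, `{y,x} = 1`.  Generators: `0 = x`, `1 = y`, `2 = δ_x`, `3 = δ_y`. -/
inductive PoissonEnvRel (K : Type*) [Field K] :
    FreeAlgebra K (Fin 4) → FreeAlgebra K (Fin 4) → Prop
  | comm_xy : PoissonEnvRel K (FreeAlgebra.ι K 0 * FreeAlgebra.ι K 1)
      (FreeAlgebra.ι K 1 * FreeAlgebra.ι K 0)
  | comm_dxdy : PoissonEnvRel K (FreeAlgebra.ι K 2 * FreeAlgebra.ι K 3)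
      (FreeAlgebra.ι K 3 * FreeAlgebra.ι K 2)
  | dy_x : PoissonEnvRel K
      (FreeAlgebra.ι K 3 * FreeAlgebra.ι K 0 - FreeAlgebra.ι K 0 * FreeAlgebra.ι K 3) 1
  | dy_y : PoissonEnvRel K (FreeAlgebra.ι K 3 * FreeAlgebra.ι K 1)
      (FreeAlgebra.ι K 1 * FreeAlgebra.ι K 3)
  | dx_y : PoissonEnvRel K
      (FreeAlgebra.ι K 2 * FreeAlgebra.ι K 1 - FreeAlgebra.ι K 1 * FreeAlgebra.ι K 2) (-1)
  | dx_x : PoissonEnvRel K (FreeAlgebra.ι K 2 * FreeAlgebra.ι K 0)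
      (FreeAlgebra.ι K 0 * FreeAlgebra.ι K 2)

/-- Defining relations of the second Weyl algebra `A₂`: generators `p i = inl i`,
`q j = inr j` (`i, j : Fin 2`), with `[p_i, q_j] = δ_{ij}`, `[p_i,p_j] = [q_i,q_j] = 0`. -/
inductive WeylRel (K : Type*) [Field K] :
    FreeAlgebra K (Fin 2 ⊕ Fin 2) → FreeAlgebra K (Fin 2 ⊕ Fin 2) → Prop
  | pq_same (i : Fin 2) : WeylRel K
      (FreeAlgebra.ι K (.inl i) * FreeAlgebra.ι K (.inr i)
        - FreeAlgebra.ι K (.inr i) * FreeAlgebra.ι K (.inl i)) 1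
  | pq_ne (i j : Fin 2) (h : i ≠ j) : WeylRel K
      (FreeAlgebra.ι K (.inl i) * FreeAlgebra.ι K (.inr j))
      (FreeAlgebra.ι K (.inr j) * FreeAlgebra.ι K (.inl i))
  | pp (i j : Fin 2) : WeylRel K
      (FreeAlgebra.ι K (.inl i) * FreeAlgebra.ι K (.inl j))
      (FreeAlgebra.ι K (.inl j) * FreeAlgebra.ι K (.inl i))
  | qq (i j : Fin 2) : WeylRel K
      (FreeAlgebra.ι K (.inr i) * FreeAlgebra.ι K (.inr j))
      (FreeAlgebra.ι K (.inr j) * FreeAlgebra.ι K (.inr i))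

/-!
In the Darboux coordinates `p₀ = δ_y`, `p₁ = -δ_x`, `q₀ = x`, `q₁ = y` the defining relations of
`U(P₂)` are exactly the defining relations of `A₂`. The universal properties of the two
presentations therefore give algebra maps in both directions which are mutually inverse on
generators.
-/

open FreeAlgebra RingQuot

attribute [local instance] LieRing.ofAssociativeRing

namespace RingQuot

section Generators

variable {K X A : Type*} [CommRing K] [Semiring A] [Algebra K A]
  {r : FreeAlgebra K X → FreeAlgebra K X → Prop}

noncomputable def liftOfGenerators (f : X → A)
    (hf : ∀ ⦃a b⦄, r a b → FreeAlgebra.lift K f a = FreeAlgebra.lift K f b) :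
    RingQuot r →ₐ[K] A :=
  liftAlgHom K ⟨FreeAlgebra.lift K f, hf⟩

@[simp]
theorem liftOfGenerators_mkAlgHom_ι (f : X → A)
    (hf : ∀ ⦃a b⦄, r a b → FreeAlgebra.lift K f a = FreeAlgebra.lift K f b) (x : X) :
    liftOfGenerators f hf (mkAlgHom K r (ι K x)) = f x := by
  rw [liftOfGenerators, liftAlgHom_mkAlgHom_apply, lift_ι_apply]

theorem algHom_ext_of_generators {f g : RingQuot r →ₐ[K] A}
    (h : ∀ x, f (mkAlgHom K r (ι K x)) = g (mkAlgHom K r (ι K x))) : f = g :=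
  ringQuot_ext' K f g (FreeAlgebra.hom_ext (funext h))

end Generators

variable (K : Type*) {A : Type*} [CommSemiring K] {r : A → A → Prop}

theorem commute_mkAlgHom_of_rel [Semiring A] [Algebra K A] {a b : A} (h : r (a * b) (b * a)) :
    Commute (mkAlgHom K r a) (mkAlgHom K r b) :=
  (map_mul _ a b).symm.trans ((mkAlgHom_rel K h).trans (map_mul _ b a))

theorem lie_mkAlgHom_of_rel [Ring A] [Algebra K A] {a b c : A} (h : r (a * b - b * a) c) :
    ⁅mkAlgHom K r a, mkAlgHom K r b⁆ = mkAlgHom K r c := by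
  rw [Ring.lie_def, ← map_mul, ← map_mul, ← map_sub, mkAlgHom_rel K h]

end RingQuot

section Presentations

variable (K : Type*) [Field K]

namespace WeylRel

noncomputable def gen (a : Fin 2 ⊕ Fin 2) : RingQuot (WeylRel K) := mkAlgHom K _ (ι K a)

theorem lie_gen_inl_inr_self (i : Fin 2) : ⁅gen K (.inl i), gen K (.inr i)⁆ = 1 :=
  (lie_mkAlgHom_of_rel K (pq_same i)).trans (map_one _)

theorem commute_gen_inl_inr {i j : Fin 2} (h : i ≠ j) :
    Commute (gen K (.inl i)) (gen K (.inr j)) :=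
  commute_mkAlgHom_of_rel K (pq_ne i j h)

theorem commute_gen_inl_inl (i j : Fin 2) : Commute (gen K (.inl i)) (gen K (.inl j)) :=
  commute_mkAlgHom_of_rel K (pp i j)

theorem commute_gen_inr_inr (i j : Fin 2) : Commute (gen K (.inr i)) (gen K (.inr j)) :=
  commute_mkAlgHom_of_rel K (qq i j)

end WeylRel

namespace PoissonEnvRel

noncomputable def gen (i : Fin 4) : RingQuot (PoissonEnvRel K) := mkAlgHom K _ (ι K i)

theorem commute_x_y : Commute (gen K 0) (gen K 1) := commute_mkAlgHom_of_rel K comm_xy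

theorem commute_δx_δy : Commute (gen K 2) (gen K 3) := commute_mkAlgHom_of_rel K comm_dxdy

theorem lie_δy_x : ⁅gen K 3, gen K 0⁆ = 1 := (lie_mkAlgHom_of_rel K dy_x).trans (map_one _)

theorem commute_δy_y : Commute (gen K 3) (gen K 1) := commute_mkAlgHom_of_rel K dy_y

theorem lie_δx_y : ⁅gen K 2, gen K 1⁆ = -1 :=
  (lie_mkAlgHom_of_rel K dx_y).trans ((map_neg _ 1).trans (congrArg _ (map_one _)))

theorem commute_δx_x : Commute (gen K 2) (gen K 0) := commute_mkAlgHom_of_rel K dx_x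

end PoissonEnvRel

section UniversalProperties

variable {A : Type*} [Ring A] [Algebra K A]

noncomputable def WeylRel.lift (p q : Fin 2 → A) (hpq : ∀ i, ⁅p i, q i⁆ = 1)
    (hpq_ne : ∀ i j, i ≠ j → Commute (p i) (q j)) (hpp : ∀ i j, Commute (p i) (p j))
    (hqq : ∀ i j, Commute (q i) (q j)) : RingQuot (WeylRel K) →ₐ[K] A :=
  liftOfGenerators (Sum.elim p q) fun a b h => by
    induction h with
    | pq_same i => simpa [Ring.lie_def] using hpq i
    | pq_ne i j hij => simpa using (hpq_ne i j hij).eq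
    | pp i j => simpa using (hpp i j).eq
    | qq i j => simpa using (hqq i j).eq

noncomputable def PoissonEnvRel.lift (x y δx δy : A) (hxy : Commute x y) (hδ : Commute δx δy)
    (hδy_x : ⁅δy, x⁆ = 1) (hδy_y : Commute δy y) (hδx_y : ⁅δx, y⁆ = -1) (hδx_x : Commute δx x) :
    RingQuot (PoissonEnvRel K) →ₐ[K] A :=
  liftOfGenerators ![x, y, δx, δy] fun a b h => by
    induction h with
    | comm_xy => simpa using hxy.eq
    | comm_dxdy => simpa using hδ.eq
    | dy_x => simpa [Ring.lie_def] using hδy_x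
    | dy_y => simpa using hδy_y.eq
    | dx_y => simpa [Ring.lie_def] using hδx_y
    | dx_x => simpa using hδx_x.eq

@[simp]
theorem WeylRel.lift_gen (p q : Fin 2 → A) (hpq hpq_ne hpp hqq) (a : Fin 2 ⊕ Fin 2) :
    WeylRel.lift K p q hpq hpq_ne hpp hqq (gen K a) = Sum.elim p q a :=
  liftOfGenerators_mkAlgHom_ι _ _ a

@[simp]
theorem PoissonEnvRel.lift_gen (x y δx δy : A) (hxy hδ hδy_x hδy_y hδx_y hδx_x) (i : Fin 4) :
    PoissonEnvRel.lift K x y δx δy hxy hδ hδy_x hδy_y hδx_y hδx_x (gen K i) = ![x, y, δx, δy] i :=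
  liftOfGenerators_mkAlgHom_ι _ _ i

theorem WeylRel.algHom_ext {f g : RingQuot (WeylRel K) →ₐ[K] A}
    (h : ∀ a, f (gen K a) = g (gen K a)) : f = g :=
  algHom_ext_of_generators h

theorem PoissonEnvRel.algHom_ext {f g : RingQuot (PoissonEnvRel K) →ₐ[K] A}
    (h : ∀ i, f (gen K i) = g (gen K i)) : f = g :=
  algHom_ext_of_generators h

end UniversalProperties

noncomputable def PoissonEnvRel.toWeyl : RingQuot (PoissonEnvRel K) →ₐ[K] RingQuot (WeylRel K) :=
  lift K (WeylRel.gen K (.inr 0)) (WeylRel.gen K (.inr 1)) (-WeylRel.gen K (.inl 1))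
    (WeylRel.gen K (.inl 0)) (WeylRel.commute_gen_inr_inr K 0 1)
    (WeylRel.commute_gen_inl_inl K 1 0).neg_left (WeylRel.lie_gen_inl_inr_self K 0)
    (WeylRel.commute_gen_inl_inr K zero_ne_one) (by rw [neg_lie, WeylRel.lie_gen_inl_inr_self])
    (WeylRel.commute_gen_inl_inr K one_ne_zero).neg_left

noncomputable def WeylRel.toPoissonEnv : RingQuot (WeylRel K) →ₐ[K] RingQuot (PoissonEnvRel K) :=
  lift K ![PoissonEnvRel.gen K 3, -PoissonEnvRel.gen K 2]
    ![PoissonEnvRel.gen K 0, PoissonEnvRel.gen K 1]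
    (by simp [Fin.forall_fin_two, PoissonEnvRel.lie_δy_x, neg_lie, PoissonEnvRel.lie_δx_y])
    (by simp [Fin.forall_fin_two, PoissonEnvRel.commute_δy_y,
      (PoissonEnvRel.commute_δx_x K).neg_left])
    (by simp [Fin.forall_fin_two, (PoissonEnvRel.commute_δx_δy K).neg_left,
      (PoissonEnvRel.commute_δx_δy K).symm.neg_right])
    (by simp [Fin.forall_fin_two, PoissonEnvRel.commute_x_y K, (PoissonEnvRel.commute_x_y K).symm])

end Presentations

/-- The Poisson enveloping algebra of the symplectic plane `P₂ = K[x,y]` with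
`{y,x} = 1` is isomorphic to the second Weyl algebra `A₂`. -/
theorem poissonEnveloping_symplectic_plane_iso_weyl (K : Type*) [Field K] :
    Nonempty (RingQuot (PoissonEnvRel K) ≃ₐ[K] RingQuot (WeylRel K)) :=
  ⟨AlgEquiv.ofAlgHom (PoissonEnvRel.toWeyl K) (WeylRel.toPoissonEnv K)
    (WeylRel.algHom_ext K fun a => by
      rcases a with i | i <;> fin_cases i <;> simp [PoissonEnvRel.toWeyl, WeylRel.toPoissonEnv])
    (PoissonEnvRel.algHom_ext K fun i => by
      fin_cases i <;> simp [PoissonEnvRel.toWeyl, WeylRel.toPoissonEnv])⟩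
end

section
/- Let P be a Poisson algebra over a field K and let Ω_P be the module of Kähler differentials of the commutative algebra P, viewed inside the Poisson enveloping algebra U(P) via a db ↦ a δ_b. Then Ω_P is closed under the commutator bracket of U(P), and explicitly for all a₁, a₂, b₁, b₂ ∈ P: [a₁ da₂, b₁ db₂] = a₁{a₂, b₁} db₂ − b₁{b₂, a₁} da₂ + a₁b₁ d{a₂, b₂}. In particular, Ω_P is a Lie algebra over K with this bracket. -/
/-!
`Ω[P⁄K]` is the quotient of the free `P`-module `P →₀ P` on symbols `dx` by the relations
`d(x + y) = dx + dy`, `d(xy) = x dy + y dx` and `d(algebraMap r) = 0`. The displayed formula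
defines a `K`-bilinear bracket on `P →₀ P`; the Leibniz rule for `{·,·}` makes it respect the
relations in the first argument, and antisymmetry of `{·,·}` makes it skew-symmetric, so it
descends to `Ω[P⁄K]`. Alternation and the Jacobi identity are multilinear, hence need only be
checked on generators `a dx`, where the Jacobi identity of the bracket reduces to that of `{·,·}`.
-/

open KaehlerDifferential Finsupp

namespace LinearMap

variable {R M N Q : Type*} [CommRing R] [AddCommGroup M] [AddCommGroup N] [AddCommGroup Q]
  [Module R M] [Module R N] [Module R Q]

noncomputable def liftOfSurjective₂ (B : M →ₗ[R] M →ₗ[R] Q) (π : M →ₗ[R] N)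
    (hπ : Function.Surjective π) (hl : ker π ≤ ker B) (hr : ker π ≤ ker B.flip) :
    N →ₗ[R] N →ₗ[R] Q :=
  (B.liftQ₂ _ _ hl hr).compl₁₂ (π.quotKerEquivOfSurjective hπ).symm.toLinearMap
    (π.quotKerEquivOfSurjective hπ).symm.toLinearMap

@[simp]
theorem liftOfSurjective₂_apply (B : M →ₗ[R] M →ₗ[R] Q) (π : M →ₗ[R] N)
    (hπ : Function.Surjective π) (hl : ker π ≤ ker B) (hr : ker π ≤ ker B.flip) (s t : M) :
    B.liftOfSurjective₂ π hπ hl hr (π s) (π t) = B s t := by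
  simp [liftOfSurjective₂]

end LinearMap

theorem KaehlerDifferential.linearMap_ext_smul_D {K P N : Type*} [CommRing K] [CommRing P]
    [Algebra K P] [AddCommGroup N] [Module K N] {f g : Ω[P⁄K] →ₗ[K] N}
    (h : ∀ a x : P, f (a • D K P x) = g (a • D K P x)) : f = g :=
  (LinearMap.cancel_right (g := (linearCombination P (D K P)).restrictScalars K)
    (linearCombination_surjective K P)).1 <| lhom_ext fun x a => by
      simp only [LinearMap.comp_apply, LinearMap.restrictScalars_apply, linearCombination_single]
      exact h a x

namespace IsPoissonBracket

variable {K P : Type*} [Field K] [CommRing P] [Algebra K P] {b : P →ₗ[K] P →ₗ[K] P}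
  (hb : IsPoissonBracket K b)
include hb

theorem swap (x y : P) : b y x = -b x y := by
  have h := hb.1 (x + y)
  simp only [map_add, LinearMap.add_apply, hb.1] at h
  linear_combination h

theorem mul_left (x y z : P) : b (x * y) z = x * b y z + y * b x z := by
  rw [hb.swap, hb.2.2, hb.swap z x, hb.swap z y]
  ring

theorem algebraMap_left (r : K) (x : P) : b (algebraMap K P r) x = 0 := by
  have h : b x 1 = 0 := by
    have h := hb.2.2 x 1 1
    rw [mul_one, mul_one, one_mul] at h
    linear_combination -h
  rw [Algebra.algebraMap_eq_smul_one, map_smul, LinearMap.smul_apply, hb.swap, h, neg_zero,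
    smul_zero]

end IsPoissonBracket

section FinsuppBracket

variable {K P : Type*} [CommRing K] [CommRing P] [Algebra K P] (b : P →ₗ[K] P →ₗ[K] P)

noncomputable def bracketOnGenerators (x y : P) : P →ₗ[K] P →ₗ[K] Ω[P⁄K] :=
  LinearMap.mk₂ K
    (fun a c => (a * b x c) • D K P y - (c * b y a) • D K P x + (a * c) • D K P (b x y))
    (fun a a' c => by simp only [add_mul, map_add, mul_add, add_smul]; abel)
    (fun k a c => by simp only [map_smul, smul_mul_assoc, mul_smul_comm, smul_assoc]; module)
    (fun a c c' => by simp only [add_mul, map_add, mul_add, add_smul]; abel)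
    (fun k a c => by simp only [map_smul, smul_mul_assoc, mul_smul_comm, smul_assoc]; module)

/-- `single x a` stands for `a dx`. -/
noncomputable def finsuppBracket : (P →₀ P) →ₗ[K] (P →₀ P) →ₗ[K] Ω[P⁄K] :=
  lsum K fun x => (lsum K fun y => (bracketOnGenerators b x y).flip).flip

@[simp]
theorem finsuppBracket_single (x a y c : P) :
    finsuppBracket b (single x a) (single y c) =
      (a * b x c) • D K P y - (c * b y a) • D K P x + (a * c) • D K P (b x y) := by
  simp [finsuppBracket, bracketOnGenerators]

theorem finsuppBracket_single_add_left (x y p : P) :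
    finsuppBracket b (single (x + y) p) =
      finsuppBracket b (single x p) + finsuppBracket b (single y p) :=
  lhom_ext fun z c => by
    simp only [finsuppBracket_single, LinearMap.add_apply, map_add, mul_add, add_smul]
    module

end FinsuppBracket

section FinsuppBracketOfPoisson

variable {K P : Type*} [Field K] [CommRing P] [Algebra K P] {b : P →ₗ[K] P →ₗ[K] P}
  (hb : IsPoissonBracket K b)
include hb

theorem finsuppBracket_swap (s t : P →₀ P) : finsuppBracket b t s = -finsuppBracket b s t := by
  have h : (finsuppBracket b).flip = -finsuppBracket b :=
    lhom_ext fun x a => lhom_ext fun y c => by simp [hb.swap x y]; module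
  exact LinearMap.congr_fun₂ h s t

theorem finsuppBracket_self (s : P →₀ P) : finsuppBracket b s s = 0 := by
  induction s using Finsupp.induction_linear with
  | zero => simp
  | add s t hs ht =>
    simp only [map_add, LinearMap.add_apply, hs, ht, finsuppBracket_swap hb s t]
    abel
  | single x a => simp [hb.1]

theorem finsuppBracket_single_mul_left (x y p : P) :
    finsuppBracket b (single (x * y) p) =
      finsuppBracket b (single x (p * y)) + finsuppBracket b (single y (p * x)) :=
  lhom_ext fun z c => by
    simp only [finsuppBracket_single, LinearMap.add_apply, hb.mul_left, hb.2.2, hb.swap z,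
      map_add, Derivation.leibniz]
    module

theorem finsuppBracket_single_algebraMap_left (r : K) (p : P) :
    finsuppBracket b (single (algebraMap K P r) p) = 0 :=
  lhom_ext fun z c => by simp [hb.algebraMap_left]

theorem kerTotal_le_ker_finsuppBracket :
    (kerTotal K P).restrictScalars K ≤ LinearMap.ker (finsuppBracket b) := by
  rw [kerTotal, ← Submodule.span_smul_of_span_eq_top (Submodule.span_univ (R := K) (M := P)),
    Submodule.span_le]
  rintro _ ⟨p, -, g, hg, rfl⟩
  rw [SetLike.mem_coe, LinearMap.mem_ker]
  rcases hg with (⟨⟨x, y⟩, rfl⟩ | ⟨⟨x, y⟩, rfl⟩) | ⟨r, rfl⟩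
  · simp [smul_sub, finsuppBracket_single_add_left]
  · simp only [smul_sub, smul_add, smul_single, smul_eq_mul, mul_one, map_sub, map_add,
      finsuppBracket_single_mul_left hb]
    abel
  · simp [finsuppBracket_single_algebraMap_left hb]

theorem kerTotal_le_ker_finsuppBracket_flip :
    (kerTotal K P).restrictScalars K ≤ LinearMap.ker (finsuppBracket b).flip := fun s hs =>
  LinearMap.mem_ker.mpr <| LinearMap.ext fun t => by
    rw [LinearMap.flip_apply, finsuppBracket_swap hb,
      LinearMap.mem_ker.mp (kerTotal_le_ker_finsuppBracket hb hs), LinearMap.zero_apply, neg_zero]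

end FinsuppBracketOfPoisson

section KaehlerBracket

variable {K P : Type*} [Field K] [CommRing P] [Algebra K P] {b : P →ₗ[K] P →ₗ[K] P}
  (hb : IsPoissonBracket K b)

noncomputable def kaehlerBracket : Ω[P⁄K] →ₗ[K] Ω[P⁄K] →ₗ[K] Ω[P⁄K] :=
  (finsuppBracket b).liftOfSurjective₂ ((linearCombination P (D K P)).restrictScalars K)
    (linearCombination_surjective K P)
    (by rw [LinearMap.ker_restrictScalars, kerTotal_eq]; exact kerTotal_le_ker_finsuppBracket hb)
    (by
      rw [LinearMap.ker_restrictScalars, kerTotal_eq]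
      exact kerTotal_le_ker_finsuppBracket_flip hb)

theorem kaehlerBracket_linearCombination (s t : P →₀ P) :
    kaehlerBracket hb (linearCombination P (D K P) s) (linearCombination P (D K P) t) =
      finsuppBracket b s t :=
  LinearMap.liftOfSurjective₂_apply ..

theorem kaehlerBracket_smul_D (a x c y : P) :
    kaehlerBracket hb (a • D K P x) (c • D K P y) =
      (a * b x c) • D K P y - (c * b y a) • D K P x + (a * c) • D K P (b x y) := by
  simpa using kaehlerBracket_linearCombination hb (single x a) (single y c)

theorem kaehlerBracket_self (w : Ω[P⁄K]) : kaehlerBracket hb w w = 0 := by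
  obtain ⟨s, rfl⟩ := linearCombination_surjective K P w
  rw [kaehlerBracket_linearCombination, finsuppBracket_self hb]

theorem kaehlerBracket_jacobi_smul_D (a x c y e z : P) :
    kaehlerBracket hb (a • D K P x) (kaehlerBracket hb (c • D K P y) (e • D K P z)) =
      kaehlerBracket hb (kaehlerBracket hb (a • D K P x) (c • D K P y)) (e • D K P z) +
        kaehlerBracket hb (c • D K P y) (kaehlerBracket hb (a • D K P x) (e • D K P z)) := by
  simp only [kaehlerBracket_smul_D, map_add, map_sub, LinearMap.add_apply, LinearMap.sub_apply]
  rw [hb.2.1 x y z, hb.swap x y]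
  simp only [hb.2.2, map_add, map_neg, smul_neg]
  linear_combination (norm := module) (a * c * hb.2.1 x y e) • D K P z +
    (c * e * hb.2.1 y z a) • D K P x - (a * e * hb.2.1 x z c) • D K P y

theorem kaehlerBracket_jacobi (u v w : Ω[P⁄K]) :
    kaehlerBracket hb u (kaehlerBracket hb v w) =
      kaehlerBracket hb (kaehlerBracket hb u v) w +
        kaehlerBracket hb v (kaehlerBracket hb u w) := by
  set L := kaehlerBracket hb
  have h : (LinearMap.mul K (Module.End K Ω[P⁄K])).compl₁₂ L L =
      L.compr₂ L + ((LinearMap.mul K (Module.End K Ω[P⁄K])).compl₁₂ L L).flip :=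
    linearMap_ext_smul_D fun a x => linearMap_ext_smul_D fun c y =>
      linearMap_ext_smul_D fun e z => by simpa using kaehlerBracket_jacobi_smul_D hb a x c y e z
  simpa using LinearMap.congr_fun (LinearMap.congr_fun₂ h u v) w

end KaehlerBracket

/-- The module `Ω_P` of Kähler differentials of a Poisson algebra `P` is a Lie algebra
over `K` via the bracket
`[a₁ da₂, b₁ db₂] = a₁{a₂,b₁} db₂ − b₁{b₂,a₁} da₂ + a₁b₁ d{a₂,b₂}`
(arising as the commutator in the Poisson enveloping algebra `U(P)`). -/
theorem kaehler_lie_bracket (K P : Type*) [Field K] [CommRing P] [Algebra K P]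
    (b : P →ₗ[K] P →ₗ[K] P) (hb : IsPoissonBracket K b) :
    ∃ L : KaehlerDifferential K P →ₗ[K] KaehlerDifferential K P →ₗ[K]
        KaehlerDifferential K P,
      (∀ w, L w w = 0) ∧
      (∀ u v w, L u (L v w) = L (L u v) w + L v (L u w)) ∧
      (∀ a₁ a₂ b₁ b₂ : P,
        L (a₁ • KaehlerDifferential.D K P a₂) (b₁ • KaehlerDifferential.D K P b₂) =
          (a₁ * b a₂ b₁) • KaehlerDifferential.D K P b₂
            - (b₁ * b b₂ a₁) • KaehlerDifferential.D K P a₂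
            + (a₁ * b₁) • KaehlerDifferential.D K P (b a₂ b₂)) :=
  ⟨kaehlerBracket hb, kaehlerBracket_self hb, kaehlerBracket_jacobi hb,
    kaehlerBracket_smul_D hb⟩
end
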